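/- If C is an exact category and X is a Birkhoff subcategory of C (a full replete reflective subcategory closed under subobjects and regular quotients), then X is an exact category. -/

import Mathlib

open CategoryTheory CategoryTheory.Limits

universe v u v' u'

variable {C : Type u} [Category.{v} C]

/-- An internal relation on an object `X`: a pair of jointly monic morphisms. -/
structure RelOn (X : C) where
  R : C
  r1 : R ⟶ X
  r2 : R ⟶ X
  jmono : ∀ {Z : C} (f g : Z ⟶ R), f ≫ r1 = g ≫ r1 → f ≫ r2 = g ≫ r2 → f = g

namespace RelOn

variable {X : C} (ρ : RelOn X)

def Reflexive : Prop :=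
  ∃ δ : X ⟶ ρ.R, δ ≫ ρ.r1 = 𝟙 X ∧ δ ≫ ρ.r2 = 𝟙 X

def Symmetric : Prop :=
  ∃ σ : ρ.R ⟶ ρ.R, σ ≫ ρ.r1 = ρ.r2 ∧ σ ≫ ρ.r2 = ρ.r1

/-- Transitivity, formulated with generalized elements. -/
def Transitive : Prop :=
  ∀ {Z : C} (a b : Z ⟶ ρ.R), a ≫ ρ.r2 = b ≫ ρ.r1 →
    ∃ t : Z ⟶ ρ.R, t ≫ ρ.r1 = a ≫ ρ.r1 ∧ t ≫ ρ.r2 = b ≫ ρ.r2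

def IsEquivalence : Prop := ρ.Reflexive ∧ ρ.Symmetric ∧ ρ.Transitive

/-- The relation is effective: it is the kernel pair of some morphism. -/
def Effective : Prop :=
  ∃ (Y : C) (f : X ⟶ Y) (h : ρ.r1 ≫ f = ρ.r2 ≫ f),
    Nonempty (IsLimit (PullbackCone.mk ρ.r1 ρ.r2 h))

end RelOn

/-- A Mal'tsev category: every internal reflexive relation is an equivalence relation. -/
class MaltsevCat (C : Type u) [Category.{v} C] : Prop where
  refl_is_equiv : ∀ {X : C} (ρ : RelOn X), ρ.Reflexive → ρ.Symmetric ∧ ρ.Transitive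

/-- A regular category: finitely complete, coequalizers of kernel pairs,
pullback-stable regular epimorphisms. -/
class RegularCat (C : Type u) [Category.{v} C] : Prop where
  hasFiniteLimits : HasFiniteLimits C
  hasCoeqOfKernelPair : ∀ {A B R : C} (f : A ⟶ B) (p1 p2 : R ⟶ A) (h : p1 ≫ f = p2 ≫ f),
    Nonempty (IsLimit (PullbackCone.mk p1 p2 h)) → HasCoequalizer p1 p2
  regEpiStable : ∀ {P A B Z : C} (f : A ⟶ B) (g : Z ⟶ B) (p1 : P ⟶ A) (p2 : P ⟶ Z)
    (h : p1 ≫ f = p2 ≫ g), Nonempty (IsLimit (PullbackCone.mk p1 p2 h)) →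
    Nonempty (RegularEpi f) → Nonempty (RegularEpi p2)

/-- A Barr-exact category: regular and every equivalence relation is effective. -/
class ExactCat (C : Type u) [Category.{v} C] extends RegularCat C : Prop where
  effective : ∀ {X : C} (ρ : RelOn X), ρ.IsEquivalence → ρ.Effective

/-- An internal reflexive graph. -/
structure ReflexiveGraph (C : Type u) [Category.{v} C] where
  C1 : C
  C0 : C
  d : C1 ⟶ C0
  c : C1 ⟶ C0
  e : C0 ⟶ C1
  ed : e ≫ d = 𝟙 C0
  ec : e ≫ c = 𝟙 C0

/-- An internal category structure on a reflexive graph, formulated via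
generalized elements (equivalent to the usual pullback formulation in a
finitely complete category). `comp a b _` is the composite "`a` followed by `b`". -/
structure CatStruct {C : Type u} [Category.{v} C] (G : ReflexiveGraph C) where
  comp : ∀ {Z : C} (a b : Z ⟶ G.C1), a ≫ G.c = b ≫ G.d → (Z ⟶ G.C1)
  comp_natural : ∀ {W Z : C} (w : W ⟶ Z) (a b : Z ⟶ G.C1) (h : a ≫ G.c = b ≫ G.d)
      (h' : (w ≫ a) ≫ G.c = (w ≫ b) ≫ G.d),
      w ≫ comp a b h = comp (w ≫ a) (w ≫ b) h'
  comp_d : ∀ {Z : C} (a b : Z ⟶ G.C1) (h : a ≫ G.c = b ≫ G.d), comp a b h ≫ G.d = a ≫ G.d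
  comp_c : ∀ {Z : C} (a b : Z ⟶ G.C1) (h : a ≫ G.c = b ≫ G.d), comp a b h ≫ G.c = b ≫ G.c
  comp_unit_l : ∀ {Z : C} (a : Z ⟶ G.C1) (h : (a ≫ G.d ≫ G.e) ≫ G.c = a ≫ G.d),
      comp (a ≫ G.d ≫ G.e) a h = a
  comp_unit_r : ∀ {Z : C} (a : Z ⟶ G.C1) (h : a ≫ G.c = (a ≫ G.c ≫ G.e) ≫ G.d),
      comp a (a ≫ G.c ≫ G.e) h = a
  comp_assoc : ∀ {Z : C} (a b c' : Z ⟶ G.C1) (h1 : a ≫ G.c = b ≫ G.d)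
      (h2 : b ≫ G.c = c' ≫ G.d)
      (h3 : comp a b h1 ≫ G.c = c' ≫ G.d)
      (h4 : a ≫ G.c = comp b c' h2 ≫ G.d),
      comp (comp a b h1) c' h3 = comp a (comp b c' h2) h4

/-- The internal category has inverses, i.e. is an internal groupoid. -/
def CatStruct.HasInverses {C : Type u} [Category.{v} C] {G : ReflexiveGraph C}
    (S : CatStruct G) : Prop :=
  ∃ i : G.C1 ⟶ G.C1, i ≫ G.d = G.c ∧ i ≫ G.c = G.d ∧
    (∀ {Z : C} (a : Z ⟶ G.C1) (h : a ≫ G.c = (a ≫ i) ≫ G.d),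
      S.comp a (a ≫ i) h = a ≫ G.d ≫ G.e) ∧
    (∀ {Z : C} (a : Z ⟶ G.C1) (h : (a ≫ i) ≫ G.c = a ≫ G.d),
      S.comp (a ≫ i) a h = a ≫ G.c ≫ G.e)

/-- An internal groupoid. -/
structure GroupoidObj (C : Type u) [Category.{v} C] where
  graph : ReflexiveGraph C
  str : CatStruct graph
  hasInv : str.HasInverses

/-- Internal functors between internal groupoids. -/
@[ext]
structure GrpdHom (A B : GroupoidObj C) where
  f0 : A.graph.C0 ⟶ B.graph.C0
  f1 : A.graph.C1 ⟶ B.graph.C1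
  hd : f1 ≫ B.graph.d = A.graph.d ≫ f0
  hc : f1 ≫ B.graph.c = A.graph.c ≫ f0
  he : A.graph.e ≫ f1 = f0 ≫ B.graph.e
  hm : ∀ {Z : C} (a b : Z ⟶ A.graph.C1) (h : a ≫ A.graph.c = b ≫ A.graph.d)
      (h' : (a ≫ f1) ≫ B.graph.c = (b ≫ f1) ≫ B.graph.d),
      A.str.comp a b h ≫ f1 = B.str.comp (a ≫ f1) (b ≫ f1) h'

lemma GrpdHom.cond {A B : GroupoidObj C} (f : GrpdHom A B) {Z : C} {a b : Z ⟶ A.graph.C1}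
    (h : a ≫ A.graph.c = b ≫ A.graph.d) :
    (a ≫ f.f1) ≫ B.graph.c = (b ≫ f.f1) ≫ B.graph.d := by
  rw [Category.assoc, f.hc, Category.assoc, f.hd, ← Category.assoc, h, Category.assoc]

def GrpdHom.id (A : GroupoidObj C) : GrpdHom A A where
  f0 := 𝟙 _
  f1 := 𝟙 _
  hd := by simp
  hc := by simp
  he := by simp
  hm := by intros; simp

def GrpdHom.comp {A B D : GroupoidObj C} (f : GrpdHom A B) (g : GrpdHom B D) : GrpdHom A D where
  f0 := f.f0 ≫ g.f0
  f1 := f.f1 ≫ g.f1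
  hd := by rw [Category.assoc, g.hd, ← Category.assoc, f.hd, Category.assoc]
  hc := by rw [Category.assoc, g.hc, ← Category.assoc, f.hc, Category.assoc]
  he := by rw [← Category.assoc, f.he, Category.assoc, g.he, ← Category.assoc]
  hm := by
    intro Z a b h h'
    rw [← Category.assoc, f.hm a b h (f.cond h), g.hm _ _ (f.cond h) (g.cond (f.cond h))]
    simp only [Category.assoc]

instance : Category (GroupoidObj C) where
  Hom := GrpdHom
  id := GrpdHom.id
  comp := GrpdHom.comp
  id_comp f := by apply GrpdHom.ext <;> simp [GrpdHom.comp, GrpdHom.id]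
  comp_id f := by apply GrpdHom.ext <;> simp [GrpdHom.comp, GrpdHom.id]
  assoc f g h := by apply GrpdHom.ext <;> simp [GrpdHom.comp]

/-- Coerce a morphism of internal groupoids to its underlying data. -/
def homToGrpdHom {A B : GroupoidObj C} (f : A ⟶ B) : GrpdHom A B := f

/-- Morphisms of reflexive graphs. -/
@[ext]
structure RGHom (A B : ReflexiveGraph C) where
  f0 : A.C0 ⟶ B.C0
  f1 : A.C1 ⟶ B.C1
  hd : f1 ≫ B.d = A.d ≫ f0
  hc : f1 ≫ B.c = A.c ≫ f0
  he : A.e ≫ f1 = f0 ≫ B.e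

instance : Category (ReflexiveGraph C) where
  Hom := RGHom
  id A := ⟨𝟙 _, 𝟙 _, by simp, by simp, by simp⟩
  comp f g := ⟨f.f0 ≫ g.f0, f.f1 ≫ g.f1,
    by rw [Category.assoc, g.hd, ← Category.assoc, f.hd, Category.assoc],
    by rw [Category.assoc, g.hc, ← Category.assoc, f.hc, Category.assoc],
    by rw [← Category.assoc, f.he, Category.assoc, g.he, ← Category.assoc]⟩
  id_comp f := by apply RGHom.ext <;> simp
  comp_id f := by apply RGHom.ext <;> simp
  assoc f g h := by apply RGHom.ext <;> simp

def homToRGHom {A B : ReflexiveGraph C} (f : A ⟶ B) : RGHom A B := f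

/-- The forgetful functor from internal groupoids to reflexive graphs. -/
def forgetToRG (C : Type u) [Category.{v} C] : GroupoidObj C ⥤ ReflexiveGraph C where
  obj A := A.graph
  map f := ⟨(homToGrpdHom f).f0, (homToGrpdHom f).f1, (homToGrpdHom f).hd,
    (homToGrpdHom f).hc, (homToGrpdHom f).he⟩
  map_id A := by apply RGHom.ext <;> rfl
  map_comp f g := by apply RGHom.ext <;> rfl

/-- A discrete internal groupoid: the unit is an isomorphism. -/
def GroupoidObj.IsDiscrete (A : GroupoidObj C) : Prop := IsIso A.graph.e

/-- An internal double groupoid (an internal groupoid in internal groupoids) is a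
2-groupoid when its groupoid of objects is discrete. -/
def Is2Grpd (D : GroupoidObj (GroupoidObj C)) : Prop := D.graph.C0.IsDiscrete

/-- Zero morphisms, defined without extra structure: morphisms factoring through a
zero object. -/
def IsZeroMor {A B : C} (f : A ⟶ B) : Prop :=
  ∃ (Z : C) (_ : IsZero Z) (g : A ⟶ Z) (h : Z ⟶ B), f = g ≫ h

/-- `κ` is a kernel of `α`. -/
def IsKernelOf {A B K : C} (κ : K ⟶ A) (α : A ⟶ B) : Prop :=
  IsZeroMor (κ ≫ α) ∧ ∀ {Z : C} (g : Z ⟶ A), IsZeroMor (g ≫ α) → ∃! l : Z ⟶ K, l ≫ κ = g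

/-- A split extension with kernel object `Xo`. -/
structure SplitExtOn (Xo : C) where
  A : C
  B : C
  κ : Xo ⟶ A
  α : A ⟶ B
  β : B ⟶ A
  split : β ≫ α = 𝟙 B
  ker : IsKernelOf κ α

/-- A generic split extension with kernel `Xo`: terminal among split extensions
with kernel `Xo` (morphisms being the identity on the kernel). -/
def IsGenericSplitExt {Xo : C} (E : SplitExtOn Xo) : Prop :=
  ∀ E' : SplitExtOn Xo, ∃! vw : (E'.A ⟶ E.A) × (E'.B ⟶ E.B),
    E'.κ ≫ vw.1 = E.κ ∧ vw.1 ≫ E.α = E'.α ≫ vw.2 ∧ E'.β ≫ vw.1 = vw.2 ≫ E.β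

/-- Action representability: every object admits a generic split extension. -/
def ActionRepresentable (C : Type u) [Category.{v} C] : Prop :=
  ∀ X : C, ∃ E : SplitExtOn X, IsGenericSplitExt E

/-- A protoadditive functor: preserves kernels of split epimorphisms. -/
def Protoadditive {X : Type u'} [Category.{v'} X] (H : X ⥤ C) : Prop :=
  ∀ {A B K : X} (α : A ⟶ B) (β : B ⟶ A), β ≫ α = 𝟙 B →
    ∀ (κ : K ⟶ A), IsKernelOf κ α → IsKernelOf (H.map κ) (H.map α)

/-- A semi-abelian category: pointed, Barr-exact, protomodular (split short five
lemma), with binary coproducts. -/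
class SemiAbelian (C : Type u) [Category.{v} C] extends ExactCat C : Prop where
  hasZeroObject : HasZeroObject C
  hasBinaryCoproducts : HasBinaryCoproducts C
  ssfl : ∀ {A B B' Co : C} (k : A ⟶ B) (p : B ⟶ Co) (s : Co ⟶ B)
      (k' : A ⟶ B') (p' : B' ⟶ Co) (s' : Co ⟶ B') (b : B ⟶ B'),
      s ≫ p = 𝟙 Co → s' ≫ p' = 𝟙 Co → IsKernelOf k p → IsKernelOf k' p' →
      k ≫ b = k' → b ≫ p' = p → s ≫ b = s' → IsIso b

/-- A natural Mal'tsev operation on a category with binary products. -/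
def IsNaturallyMaltsev (C : Type u) [Category.{v} C] [HasBinaryProducts C] : Prop :=
  ∃ p : ∀ A : C, (A ⨯ A) ⨯ A ⟶ A,
    (∀ {A B : C} (f : A ⟶ B), prod.map (prod.map f f) f ≫ p B = p A ≫ f) ∧
    (∀ A : C, prod.lift (prod.lift prod.fst prod.snd) prod.snd ≫ p A
        = (prod.fst : A ⨯ A ⟶ A)) ∧
    (∀ A : C, prod.lift (prod.lift prod.fst prod.fst) prod.snd ≫ p A
        = (prod.snd : A ⨯ A ⟶ A))


/-! The inclusion `ι` of a reflective full subcategory is a fully faithful right adjoint, so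
the subcategory has finite limits and `ι` preserves and reflects pullbacks. Closure under
regular quotients puts the `C`-coequalizer of a kernel pair of objects of the subcategory back
into it, so `ι` creates coequalizers of kernel pairs; hence `ι` preserves and reflects regular
epimorphisms and pullback stability descends from `C`. An equivalence relation in the
subcategory is still one in `C` (joint monicity and transitivity are transported along the
adjunction), so it is the kernel pair of its coequalizer in `C`, which is a regular quotient and
therefore lies in the subcategory. -/

namespace RelOn

variable {D : Type u'} [Category.{v'} D] {F : C ⥤ D} {G : D ⥤ C} (adj : F ⊣ G) {X : D}

-- Reducible, so that rewriting sees the legs of `ρ.map adj` as `G.map ρ.r1` and `G.map ρ.r2`.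
abbrev map (ρ : RelOn X) : RelOn (G.obj X) where
  R := G.obj ρ.R
  r1 := G.map ρ.r1
  r2 := G.map ρ.r2
  jmono f g h1 h2 := (adj.homEquiv _ _).symm.injective <| ρ.jmono _ _
    (by rw [← adj.homEquiv_naturality_right_symm, h1, adj.homEquiv_naturality_right_symm])
    (by rw [← adj.homEquiv_naturality_right_symm, h2, adj.homEquiv_naturality_right_symm])

variable {ρ : RelOn X}

lemma Reflexive.map (h : ρ.Reflexive) : (ρ.map adj).Reflexive := by
  obtain ⟨δ, h1, h2⟩ := h
  exact ⟨G.map δ, by rw [← G.map_comp, h1, G.map_id], by rw [← G.map_comp, h2, G.map_id]⟩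

lemma Symmetric.map (h : ρ.Symmetric) : (ρ.map adj).Symmetric := by
  obtain ⟨σ, h1, h2⟩ := h
  exact ⟨G.map σ, by rw [← G.map_comp, h1], by rw [← G.map_comp, h2]⟩

lemma Transitive.map (h : ρ.Transitive) : (ρ.map adj).Transitive := by
  intro Z a b hab
  obtain ⟨t, ht1, ht2⟩ := h ((adj.homEquiv _ _).symm a) ((adj.homEquiv _ _).symm b) (by
    rw [← adj.homEquiv_naturality_right_symm, hab, adj.homEquiv_naturality_right_symm])
  refine ⟨adj.homEquiv _ _ t, ?_, ?_⟩
  · rw [← adj.homEquiv_naturality_right, ht1, adj.homEquiv_naturality_right,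
      Equiv.apply_symm_apply]
  · rw [← adj.homEquiv_naturality_right, ht2, adj.homEquiv_naturality_right,
      Equiv.apply_symm_apply]

lemma IsEquivalence.map (h : ρ.IsEquivalence) : (ρ.map adj).IsEquivalence :=
  ⟨h.1.map adj, h.2.1.map adj, Transitive.map adj h.2.2⟩

end RelOn

namespace CategoryTheory.RegularEpi

variable {D : Type u'} [Category.{v'} D] (G : D ⥤ C) {A B : D} {g : A ⟶ B} [HasPullback g g]

noncomputable def map [PreservesColimit (parallelPair (pullback.fst g g) (pullback.snd g g)) G]
    (hg : RegularEpi g) : RegularEpi (G.map g) :=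
  have := hg.effectiveEpi
  { W := G.obj (pullback g g)
    left := G.map (pullback.fst g g)
    right := G.map (pullback.snd g g)
    w := by rw [← G.map_comp, pullback.condition, G.map_comp]
    isColimit := isColimitMapCoconeCoforkEquiv G pullback.condition <| isColimitOfPreserves G <|
      isColimitCoforkOfEffectiveEpi g (PullbackCone.mk _ _ pullback.condition)
        (pullbackIsPullback g g) }

noncomputable def ofMap [G.Full] [G.Faithful] [PreservesLimit (cospan g g) G]
    (hg : RegularEpi (G.map g)) : RegularEpi g :=
  have := hg.effectiveEpi
  have hk : IsKernelPair (G.map g) (G.map (pullback.fst g g)) (G.map (pullback.snd g g)) :=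
    (IsPullback.of_hasPullback g g).map G
  regularEpiOfKernelPair g <| isColimitOfReflects G <|
    (isColimitMapCoconeCoforkEquiv G pullback.condition).symm <|
      isColimitCoforkOfEffectiveEpi (G.map g) _ hk.isLimit

end CategoryTheory.RegularEpi

theorem CategoryTheory.IsKernelPair.coequalizer_π {A B R : C} {f : A ⟶ B} {a b : R ⟶ A}
    [HasCoequalizer a b] (h : IsKernelPair f a b) : IsKernelPair (coequalizer.π a b) a b :=
  IsKernelPair.cancel_right (coequalizer.condition a b) (by rwa [coequalizer.π_desc f h.w])

namespace RegularCat

variable [RegularCat C]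

lemma hasCoequalizer {A B R : C} {f : A ⟶ B} {p q : R ⟶ A} (hk : IsKernelPair f p q) :
    HasCoequalizer p q :=
  hasCoeqOfKernelPair f p q hk.w hk.isLimit'

lemma regularEpi_of_isPullback {A B Z R : C} {f : A ⟶ B} {g : Z ⟶ B} {p1 : R ⟶ A}
    {p2 : R ⟶ Z} (h : IsPullback p1 p2 f g) (hf : Nonempty (RegularEpi f)) :
    Nonempty (RegularEpi p2) :=
  regEpiStable f g p1 p2 h.w h.isLimit' hf

section FullSubcategory

variable {P : ObjectProperty C}

lemma hasCoequalizer_and_preservesColimit_ι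
    (hquot : ∀ {A B : C} (f : A ⟶ B), Nonempty (RegularEpi f) → P A → P B)
    {A B R : P.FullSubcategory} {f : A ⟶ B} {p q : R ⟶ A}
    (hk : IsKernelPair (P.ι.map f) (P.ι.map p) (P.ι.map q)) :
    HasCoequalizer p q ∧ PreservesColimit (parallelPair p q) P.ι := by
  have := hasCoequalizer hk
  have hc : IsColimit (coequalizer.cofork (P.ι.map p) (P.ι.map q)) := colimit.isColimit _
  have hc' := (IsColimit.precomposeHomEquiv
    (diagramIsoParallelPair (parallelPair p q ⋙ P.ι)) _).symm hc
  have := createsColimitFullSubcategoryInclusion' (parallelPair p q) hc'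
    (hquot _ ⟨coequalizerRegular _ _⟩ A.property)
  have : HasColimit (parallelPair p q ⋙ P.ι) := ⟨⟨_, hc'⟩⟩
  exact ⟨hasColimit_of_created _ P.ι, inferInstance⟩

lemma exists_isKernelPair_of_map_ι
    (hquot : ∀ {A B : C} (f : A ⟶ B), Nonempty (RegularEpi f) → P A → P B)
    {A R : P.FullSubcategory} {p q : R ⟶ A} {Y : C} {f : P.ι.obj A ⟶ Y}
    (hk : IsKernelPair f (P.ι.map p) (P.ι.map q)) :
    ∃ (Q : P.FullSubcategory) (g : A ⟶ Q), IsKernelPair g p q := by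
  have := hasCoequalizer hk
  refine ⟨⟨_, hquot _ ⟨coequalizerRegular (P.ι.map p) (P.ι.map q)⟩ A.property⟩,
    ObjectProperty.homMk (coequalizer.π _ _), ?_⟩
  exact hk.coequalizer_π.of_map P.ι (ObjectProperty.hom_ext _
    (coequalizer.condition (P.ι.map p) (P.ι.map q)))

theorem fullSubcategory [Reflective P.ι]
    (hquot : ∀ {A B : C} (f : A ⟶ B), Nonempty (RegularEpi f) → P A → P B) :
    RegularCat P.FullSubcategory := by
  have : HasFiniteLimits C := hasFiniteLimits
  have : HasFiniteLimits P.FullSubcategory :=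
    ⟨fun _ _ _ => hasLimitsOfShape_of_reflective P.ι⟩
  refine ⟨this, fun f p q w hl => ?_, fun f g p1 p2 w hl ⟨hf⟩ => ?_⟩
  · exact (hasCoequalizer_and_preservesColimit_ι hquot
      ((⟨⟨w⟩, hl⟩ : IsKernelPair f p q).map P.ι)).1
  · have := (hasCoequalizer_and_preservesColimit_ι hquot
      ((IsPullback.of_hasPullback f f).map P.ι)).2
    obtain ⟨hp2⟩ := regularEpi_of_isPullback
      ((⟨⟨w⟩, hl⟩ : IsPullback p1 p2 f g).map P.ι) ⟨hf.map P.ι⟩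
    exact ⟨hp2.ofMap P.ι⟩

end FullSubcategory

end RegularCat

theorem RelOn.IsEquivalence.effective_fullSubcategory [ExactCat C] {P : ObjectProperty C}
    [Reflective P.ι] (hquot : ∀ {A B : C} (f : A ⟶ B), Nonempty (RegularEpi f) → P A → P B)
    {A : P.FullSubcategory} {ρ : RelOn A} (hρ : ρ.IsEquivalence) : ρ.Effective := by
  obtain ⟨Y, f, w, hl⟩ := ExactCat.effective _ (hρ.map (reflectorAdjunction P.ι))
  obtain ⟨Q, q, hq⟩ :=
    RegularCat.exists_isKernelPair_of_map_ι hquot (⟨⟨w⟩, hl⟩ : IsKernelPair f _ _)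
  exact ⟨Q, q, hq.w, hq.isLimit'⟩

theorem stmt6_general {C : Type u} [Category.{v} C] [ExactCat C]
    (P : C → Prop) [Reflective (ObjectProperty.ι P)]
    (hquot : ∀ {A B : C} (f : A ⟶ B), Nonempty (RegularEpi f) → P A → P B) :
    ExactCat (ObjectProperty.FullSubcategory P) :=
  { RegularCat.fullSubcategory hquot with
    effective := fun _ hρ => hρ.effective_fullSubcategory hquot }

/-- A Birkhoff subcategory of an exact category is exact. -/
theorem stmt6 {C : Type u} [Category.{v} C] [ExactCat C]
    (P : C → Prop) [Reflective (ObjectProperty.ι P)]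
    (hrep : ∀ {A B : C}, P A → (A ≅ B) → P B)
    (hsub : ∀ {A B : C} (f : A ⟶ B), Mono f → P B → P A)
    (hquot : ∀ {A B : C} (f : A ⟶ B), Nonempty (RegularEpi f) → P A → P B) :
    ExactCat (ObjectProperty.FullSubcategory P) :=
  stmt6_general P hquot
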